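/- arXiv:1210.2537 — 2 statements merged into one kernel-verified Lean document; each statement's English description precedes it below -/
import Mathlib

section
/- Let σ₁, …, σ₆ take values ±1 and set σ₇ = σ₁. Then cosh(J∑_{i=1}^{6} σᵢσ_{i+1}) = cosh(J(σ₂ + σ₄ + σ₆) + J(σ₁σ₂σ₃ + σ₃σ₄σ₅ + σ₅σ₆σ₇)). -/
lemma cosh_eq_of (a b : ℝ) (h : a = b ∨ a = -b) : Real.cosh a = Real.cosh b := by
  rcases h with h | h <;> rw [h] <;> simp [Real.cosh_neg]

/-- Partial-trace identity for k = 3: with σ₁,…,σ₆ ∈ {±1} and σ₇ = σ₁. -/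
theorem partial_trace_k3 (J σ1 σ2 σ3 σ4 σ5 σ6 σ7 : ℝ)
    (h1 : σ1 = 1 ∨ σ1 = -1) (h2 : σ2 = 1 ∨ σ2 = -1)
    (h3 : σ3 = 1 ∨ σ3 = -1) (h4 : σ4 = 1 ∨ σ4 = -1)
    (h5 : σ5 = 1 ∨ σ5 = -1) (h6 : σ6 = 1 ∨ σ6 = -1) (h7 : σ7 = σ1) :
    Real.cosh (J * (σ1 * σ2 + σ2 * σ3 + σ3 * σ4 + σ4 * σ5 + σ5 * σ6 + σ6 * σ7)) =
      Real.cosh (J * (σ2 + σ4 + σ6) +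
        J * (σ1 * σ2 * σ3 + σ3 * σ4 * σ5 + σ5 * σ6 * σ7)) := by
  subst h7
  apply cosh_eq_of
  rcases h1 with h1 | h1 <;> rcases h2 with h2 | h2 <;> rcases h3 with h3 | h3 <;>
    rcases h4 with h4 | h4 <;> rcases h5 with h5 | h5 <;> rcases h6 with h6 | h6 <;>
    subst_vars <;> first | (left; ring1) | (right; ring1)
end

section
/- For real couplings J₁, J₂, J₃, J₄, the sum over σ₀ ∈ {−1,+1} of exp(σ₀(J₁σ₁σ₂ + J₂σ₂σ₃ + J₃σ₃σ₄ + J₄σ₄σ₁)) equals 2·exp(K₀ + K₂σ₂σ₄ + K₂′σ₁σ₃ + K₄σ₁σ₂σ₃σ₄) for all σ₁,…,σ₄ ∈ {−1,+1}, where e^{4K₀} = cosh(J₁+J₂+J₃+J₄)cosh(J₁+J₂−J₃−J₄)cosh(J₁−J₂−J₃+J₄)cosh(J₁−J₂+J₃−J₄), e^{4K₂} = [cosh(J₁+J₂+J₃+J₄)cosh(J₁−J₂−J₃+J₄)]/[cosh(J₁+J₂−J₃−J₄)cosh(J₁−J₂+J₃−J₄)], e^{4K₂′} = [cosh(J₁+J₂+J₃+J₄)cosh(J₁+J₂−J₃−J₄)]/[cosh(J₁−J₂−J₃+J₄)cosh(J₁−J₂+J₃−J₄)],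 and e^{4K₄} = [cosh(J₁+J₂+J₃+J₄)cosh(J₁−J₂+J₃−J₄)]/[cosh(J₁+J₂−J₃−J₄)cosh(J₁−J₂−J₃+J₄)]. -/
private lemma quart (x c : ℝ) (hc : 0 < c) (h : Real.exp (4 * x) = c ^ 4) :
    Real.exp x = c := by
  have h4 : Real.exp x ^ 4 = c ^ 4 := by
    rw [← Real.exp_nat_mul]; push_cast at h ⊢; exact h
  exact (pow_left_inj₀ (Real.exp_pos x).le hc.le (by norm_num)).mp h4

private lemma main_case (x y E Y : ℝ) (hE : E = x ∨ E = -x) (hY : Y = y)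
    (h : Real.exp y = Real.cosh x) :
    Real.exp (1 * E) + Real.exp ((-1) * E) = 2 * Real.exp Y := by
  subst hY
  rw [h, Real.cosh_eq]
  rcases hE with rfl | rfl <;> ring_nf

/-- Decimation transformation of a degree-4 vertex of the generalized HMBW model:
summing over σ₀ = ±1 produces Ashkin–Teller couplings K₀, K₂, K₂′, K₄ determined
by the stated cosh relations. -/
theorem decimation_transformation (J1 J2 J3 J4 K0 K2 K2' K4 : ℝ)
    (hK0 : Real.exp (4 * K0) =
      Real.cosh (J1 + J2 + J3 + J4) * Real.cosh (J1 + J2 - J3 - J4) *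
        Real.cosh (J1 - J2 - J3 + J4) * Real.cosh (J1 - J2 + J3 - J4))
    (hK2 : Real.exp (4 * K2) =
      Real.cosh (J1 + J2 + J3 + J4) * Real.cosh (J1 - J2 - J3 + J4) /
        (Real.cosh (J1 + J2 - J3 - J4) * Real.cosh (J1 - J2 + J3 - J4)))
    (hK2' : Real.exp (4 * K2') =
      Real.cosh (J1 + J2 + J3 + J4) * Real.cosh (J1 + J2 - J3 - J4) /
        (Real.cosh (J1 - J2 - J3 + J4) * Real.cosh (J1 - J2 + J3 - J4)))
    (hK4 : Real.exp (4 * K4) =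
      Real.cosh (J1 + J2 + J3 + J4) * Real.cosh (J1 - J2 + J3 - J4) /
        (Real.cosh (J1 + J2 - J3 - J4) * Real.cosh (J1 - J2 - J3 + J4)))
    (σ1 σ2 σ3 σ4 : ℝ)
    (h1 : σ1 = 1 ∨ σ1 = -1) (h2 : σ2 = 1 ∨ σ2 = -1)
    (h3 : σ3 = 1 ∨ σ3 = -1) (h4 : σ4 = 1 ∨ σ4 = -1) :
    Real.exp (1 * (J1 * σ1 * σ2 + J2 * σ2 * σ3 + J3 * σ3 * σ4 + J4 * σ4 * σ1)) +
      Real.exp ((-1) * (J1 * σ1 * σ2 + J2 * σ2 * σ3 + J3 * σ3 * σ4 + J4 * σ4 * σ1)) =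
      2 * Real.exp (K0 + K2 * σ2 * σ4 + K2' * σ1 * σ3 + K4 * σ1 * σ2 * σ3 * σ4) := by
  set A := Real.cosh (J1 + J2 + J3 + J4) with hA
  set B := Real.cosh (J1 + J2 - J3 - J4) with hB
  set C := Real.cosh (J1 - J2 - J3 + J4) with hC
  set D := Real.cosh (J1 - J2 + J3 - J4) with hD
  have hAp : 0 < A := by rw [hA]; exact Real.cosh_pos _
  have hBp : 0 < B := by rw [hB]; exact Real.cosh_pos _
  have hCp : 0 < C := by rw [hC]; exact Real.cosh_pos _
  have hDp : 0 < D := by rw [hD]; exact Real.cosh_pos _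
  have key1 : Real.exp (K0 + K2 + K2' + K4) = A := by
    apply quart _ _ hAp
    rw [show 4 * (K0 + K2 + K2' + K4) = 4*K0 + 4*K2 + 4*K2' + 4*K4 by ring,
      Real.exp_add, Real.exp_add, Real.exp_add, hK0, hK2, hK2', hK4]
    field_simp
  have key2 : Real.exp (K0 + K2 - K2' - K4) = C := by
    apply quart _ _ hCp
    rw [show 4 * (K0 + K2 - K2' - K4) = (4*K0 + 4*K2) - (4*K2' + 4*K4) by ring,
      Real.exp_sub, Real.exp_add, Real.exp_add, hK0, hK2, hK2', hK4]
    field_simp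
  have key3 : Real.exp (K0 - K2 + K2' - K4) = B := by
    apply quart _ _ hBp
    rw [show 4 * (K0 - K2 + K2' - K4) = (4*K0 + 4*K2') - (4*K2 + 4*K4) by ring,
      Real.exp_sub, Real.exp_add, Real.exp_add, hK0, hK2, hK2', hK4]
    field_simp
  have key4 : Real.exp (K0 - K2 - K2' + K4) = D := by
    apply quart _ _ hDp
    rw [show 4 * (K0 - K2 - K2' + K4) = (4*K0 + 4*K4) - (4*K2 + 4*K2') by ring,
      Real.exp_sub, Real.exp_add, Real.exp_add, hK0, hK2, hK2', hK4]
    field_simp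
  rcases h1 with rfl | rfl <;> rcases h2 with rfl | rfl <;>
    rcases h3 with rfl | rfl <;> rcases h4 with rfl | rfl
  · exact main_case _ _ _ _ (Or.inl (by ring)) (by ring) key1
  · exact main_case _ _ _ _ (Or.inl (by ring)) (by ring) key3
  · exact main_case _ _ _ _ (Or.inl (by ring)) (by ring) key2
  · exact main_case _ _ _ _ (Or.inl (by ring)) (by ring) key4
  · exact main_case _ _ _ _ (Or.inr (by ring)) (by ring) key3
  · exact main_case _ _ _ _ (Or.inr (by ring)) (by ring) key1
  · exact main_case _ _ _ _ (Or.inr (by ring)) (by ring) key4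
  · exact main_case _ _ _ _ (Or.inr (by ring)) (by ring) key2
  · exact main_case _ _ _ _ (Or.inr (by ring)) (by ring) key2
  · exact main_case _ _ _ _ (Or.inr (by ring)) (by ring) key4
  · exact main_case _ _ _ _ (Or.inr (by ring)) (by ring) key1
  · exact main_case _ _ _ _ (Or.inr (by ring)) (by ring) key3
  · exact main_case _ _ _ _ (Or.inl (by ring)) (by ring) key4
  · exact main_case _ _ _ _ (Or.inl (by ring)) (by ring) key2
  · exact main_case _ _ _ _ (Or.inl (by ring)) (by ring) key3
  · exact main_case _ _ _ _ (Or.inl (by ring)) (by ring) key1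
end
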